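/- Finite-time rollout stability under closure perturbation. Let L > 0, T > 0, λ > 0, M ≥ 0 and K ≥ 0. There exists a constant C_T ≥ 0, depending only on L, T, λ, M and K, with the following property. Let D₁, D₂, R₁, R₂ : ℝ → ℝ be Lipschitz with Lipschitz constant at most M and bounded by M on [−K, K], with D₁(s) ≥ λ and D₂(s) ≥ λ for all s ∈ [−K, K] (uniform parabolicity). Let u₁, u₂ : ℝ × ℝ → ℝ be classical solutions on [0, T], i.e. continuous with continuous ∂ₜuᵢ, ∂ₓuᵢ, ∂ₓₓuᵢ, L-periodic in x, satisfying ∂ₜuᵢ = ∂ₓ( Dᵢ(uᵢ) ∂ₓuᵢ ) + Rᵢ(uᵢ) for t ∈ [0, T], with the same initial data u₁(0, ·) = u₂(0, ·), and with uniform bounds |uᵢ(t,x)| ≤ K and |∂ₓuᵢ(t,x)| ≤ K on [0,T] × ℝ. Then for all t ∈ [0, T], ( ∫₀ᴸ ( u₁(t,x) − u₂(t,x) )² dx )^{1/2} ≤ C_T ( sup_{|s| ≤ K} |D₁(s) − D₂(s)| + sup_{|s| ≤ K} |R₁(s) − R₂(s)| ). -/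

import Mathlib

/-- A closure pair `(D, R)` is admissible with parabolicity constant `lam`,
Lipschitz/bound constant `M`, and state range `[-K, K]`: both closures are
`M`-Lipschitz and bounded by `M` on `[-K, K]`, and `D ≥ lam` on `[-K, K]`
(uniform parabolicity). -/
def ClosureAdmissible (lam M K : ℝ) (D R : ℝ → ℝ) : Prop :=
  (∀ s₁ s₂ : ℝ, |D s₁ - D s₂| ≤ M * |s₁ - s₂|) ∧
  (∀ s₁ s₂ : ℝ, |R s₁ - R s₂| ≤ M * |s₁ - s₂|) ∧
  (∀ s ∈ Set.Icc (-K) K, |D s| ≤ M) ∧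
  (∀ s ∈ Set.Icc (-K) K, |R s| ≤ M) ∧
  (∀ s ∈ Set.Icc (-K) K, lam ≤ D s)

/-- `u` is a classical `L`-periodic solution on `[0, T]` of
`∂ₜu = ∂ₓ(D(u) ∂ₓu) + R(u)` with state and gradient bounds `K`:
`u` is continuous together with its partial derivatives `ut = ∂ₜu`,
`ux = ∂ₓu`, `uxx = ∂ₓₓu`, it is `L`-periodic in `x`, satisfies the PDE
pointwise for `t ∈ [0, T]` (expressed by saying the flux
`x ↦ D(u t x) * ux t x` has spatial derivative `ut t x - R (u t x)`),
and obeys `|u| ≤ K`, `|∂ₓu| ≤ K` on `[0, T] × ℝ`. -/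
structure IsClassicalSolution (L T K : ℝ) (D R : ℝ → ℝ)
    (u ut ux uxx : ℝ → ℝ → ℝ) : Prop where
  cont : Continuous fun p : ℝ × ℝ => u p.1 p.2
  cont_t : Continuous fun p : ℝ × ℝ => ut p.1 p.2
  cont_x : Continuous fun p : ℝ × ℝ => ux p.1 p.2
  cont_xx : Continuous fun p : ℝ × ℝ => uxx p.1 p.2
  deriv_t : ∀ t x : ℝ, HasDerivAt (fun s => u s x) (ut t x) t
  deriv_x : ∀ t x : ℝ, HasDerivAt (fun y => u t y) (ux t x) x
  deriv_xx : ∀ t x : ℝ, HasDerivAt (fun y => ux t y) (uxx t x) x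
  periodic : ∀ t x : ℝ, u t (x + L) = u t x
  pde : ∀ t ∈ Set.Icc (0:ℝ) T, ∀ x : ℝ,
    HasDerivAt (fun y => D (u t y) * ux t y) (ut t x - R (u t x)) x
  bound_u : ∀ t ∈ Set.Icc (0:ℝ) T, ∀ x : ℝ, |u t x| ≤ K
  bound_ux : ∀ t ∈ Set.Icc (0:ℝ) T, ∀ x : ℝ, |ux t x| ≤ K

/-
Energy method. The squared distance `E(t) = ∫₀ᴸ (u₁ - u₂)²` has derivative `2 ∫ w ∂ₜw`
with `w = u₁ - u₂`; one periodic integration by parts turns it into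
`-2 ∫ ∂ₓw (D₁(u₁) ∂ₓu₁ - D₂(u₂) ∂ₓu₂) + 2 ∫ w (R₁(u₁) - R₂(u₂))`. Writing the flux gap as
`D₁(u₁) ∂ₓw + (D₁(u₁) - D₂(u₂)) ∂ₓu₂`, parabolicity absorbs the first part (Young), while the
Lipschitz bounds, `|∂ₓu₂| ≤ K` and the closure deviations `ε_D`, `ε_R` control the rest, so
`E' ≤ A E + B L (ε_D + ε_R)²` with `A = M²K²/λ + 2M + 1`, `B = K²/λ + 1`. Since `E(0) = 0`,
Grönwall gives `E(t) ≤ B L (e^{AT} - 1)/A · (ε_D + ε_R)²`.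
-/

open MeasureTheory Set Function Real

theorem Function.Periodic.periodic_of_hasDerivAt {u u' : ℝ → ℝ} {L : ℝ} (hu : Periodic u L)
    (hd : ∀ x, HasDerivAt u (u' x) x) : Periodic u' L := fun x => by
  have hshift : HasDerivAt (fun y => u (y + L)) (u' (x + L)) x := (hd (x + L)).comp_add_const x L
  rw [funext hu] at hshift
  exact hshift.unique (hd x)

theorem le_gronwallBound_of_hasDerivAt {f f' : ℝ → ℝ} {δ K ε a b : ℝ}
    (hf : ∀ x ∈ Icc a b, HasDerivAt f (f' x) x) (ha : f a ≤ δ)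
    (bound : ∀ x ∈ Ico a b, f' x ≤ K * f x + ε) :
    ∀ x ∈ Icc a b, f x ≤ gronwallBound δ K ε (x - a) :=
  le_gronwallBound_of_liminf_deriv_right_le
    (fun x hx => (hf x hx).continuousAt.continuousWithinAt)
    (fun x hx _ hr => (hf x (Ico_subset_Icc_self hx)).hasDerivWithinAt.liminf_right_slope_le hr)
    ha bound

theorem abs_sub_le_iSup_of_abs_le {f g : ℝ → ℝ} {S : Set ℝ} {M : ℝ}
    (hf : ∀ s ∈ S, |f s| ≤ M) (hg : ∀ s ∈ S, |g s| ≤ M) {s : ℝ} (hs : s ∈ S) :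
    |f s - g s| ≤ ⨆ s : S, |f s - g s| :=
  le_ciSup (f := fun s : S => |f s - g s|)
    ⟨M + M, by
      rintro _ ⟨s, rfl⟩
      exact (abs_sub _ _).trans (add_le_add (hf s s.2) (hg s s.2))⟩ ⟨s, hs⟩

theorem intervalIntegral.hasDerivAt_integral_of_continuous {F F' : ℝ → ℝ → ℝ} {a b : ℝ}
    (hF : Continuous fun p : ℝ × ℝ => F p.1 p.2) (hF' : Continuous fun p : ℝ × ℝ => F' p.1 p.2)
    (hd : ∀ t x, HasDerivAt (fun s => F s x) (F' t x) t) (t₀ : ℝ) :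
    HasDerivAt (fun t => ∫ x in a..b, F t x) (∫ x in a..b, F' t₀ x) t₀ := by
  obtain ⟨C, hC⟩ := ((isCompact_Icc (a := t₀ - 1) (b := t₀ + 1)).prod
    (isCompact_uIcc (a := a) (b := b))).exists_bound_of_continuousOn hF'.continuousOn
  refine (intervalIntegral.hasDerivAt_integral_of_dominated_loc_of_deriv_le
    (bound := fun _ => C) (Metric.ball_mem_nhds t₀ one_pos)
    (Filter.Eventually.of_forall fun t => (hF.uncurry_left t).aestronglyMeasurable)
    ((hF.uncurry_left t₀).intervalIntegrable a b)
    (hF'.uncurry_left t₀).aestronglyMeasurable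
    (ae_of_all _ fun x hx t ht => hC (t, x) ⟨?_, uIoc_subset_uIcc hx⟩)
    intervalIntegrable_const (ae_of_all _ fun x _ t _ => hd t x)).2
  rw [Metric.mem_ball, Real.dist_eq, abs_sub_lt_iff] at ht
  constructor <;> linarith

theorem intervalIntegral.integral_mul_deriv_eq_neg_deriv_mul_of_periodic {u u' v v' : ℝ → ℝ}
    {L : ℝ} (hu : Periodic u L) (hv : Periodic v L) (hu' : ∀ x, HasDerivAt u (u' x) x)
    (hv' : ∀ x, HasDerivAt v (v' x) x) (hu'i : IntervalIntegrable u' volume 0 L)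
    (hv'i : IntervalIntegrable v' volume 0 L) :
    ∫ x in 0..L, u x * v' x = -∫ x in 0..L, u' x * v x := by
  rw [integral_mul_deriv_eq_deriv_mul (fun x _ => hu' x) (fun x _ => hv' x) hu'i hv'i,
    ← zero_add L, hu 0, hv 0]
  ring

theorem neg_two_mul_mul_add_le_sq_div {lam d a c : ℝ} (hlam : 0 < lam) (hd : lam ≤ d) :
    -2 * a * (d * a + c) ≤ c ^ 2 / (2 * lam) := by
  rw [le_div_iff₀ (by positivity)]
  nlinarith [sq_nonneg (2 * lam * a + c),
    mul_nonneg (mul_nonneg hlam.le (sub_nonneg.2 hd)) (sq_nonneg a)]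

namespace ClosureAdmissible

variable {lam M K : ℝ} {D R : ℝ → ℝ}

theorem const_nonneg (h : ClosureAdmissible lam M K D R) : 0 ≤ M := by
  simpa using (abs_nonneg _).trans (h.1 1 0)

theorem continuous_D (h : ClosureAdmissible lam M K D R) : Continuous D :=
  (LipschitzWith.of_dist_le' h.1).continuous

theorem continuous_R (h : ClosureAdmissible lam M K D R) : Continuous R :=
  (LipschitzWith.of_dist_le' h.2.1).continuous

theorem flux_reaction_gap_le {D₂ R₂ : ℝ → ℝ}
    (hA : ClosureAdmissible lam M K D R) (hlam : 0 < lam) {eD eR v₁ v₂ p₁ p₂ : ℝ}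
    (hv₁ : v₁ ∈ Icc (-K) K) (hp₂ : |p₂| ≤ K)
    (heD : |D v₂ - D₂ v₂| ≤ eD) (heR : |R v₂ - R₂ v₂| ≤ eR) :
    -2 * (p₁ - p₂) * (D v₁ * p₁ - D₂ v₂ * p₂) + 2 * (v₁ - v₂) * (R v₁ - R₂ v₂)
      ≤ (M ^ 2 * K ^ 2 / lam + 2 * M + 1) * (v₁ - v₂) ^ 2 + (K ^ 2 / lam + 1) * (eD + eR) ^ 2 := by
  obtain ⟨hDlip, hRlip, -, -, hDlam⟩ := hA
  set b := |v₁ - v₂|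
  have heD0 : 0 ≤ eD := (abs_nonneg _).trans heD
  have heR0 : 0 ≤ eR := (abs_nonneg _).trans heR
  have hD : |D v₁ - D₂ v₂| ≤ M * b + eD := (abs_sub_le _ _ _).trans (add_le_add (hDlip _ _) heD)
  have hR : |R v₁ - R₂ v₂| ≤ M * b + eR := (abs_sub_le _ _ _).trans (add_le_add (hRlip _ _) heR)
  have hflux : -2 * (p₁ - p₂) * (D v₁ * p₁ - D₂ v₂ * p₂) ≤ K ^ 2 / lam * ((M * b + eD) ^ 2 / 2) :=
    calc -2 * (p₁ - p₂) * (D v₁ * p₁ - D₂ v₂ * p₂)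
        = -2 * (p₁ - p₂) * (D v₁ * (p₁ - p₂) + (D v₁ - D₂ v₂) * p₂) := by ring
      _ ≤ ((D v₁ - D₂ v₂) * p₂) ^ 2 / (2 * lam) :=
        neg_two_mul_mul_add_le_sq_div hlam (hDlam v₁ hv₁)
      _ ≤ ((M * b + eD) * K) ^ 2 / (2 * lam) := by
        rw [← sq_abs, abs_mul]
        gcongr
        exact (abs_nonneg _).trans hD
      _ = K ^ 2 / lam * ((M * b + eD) ^ 2 / 2) := by ring
  have hreact : (v₁ - v₂) * (R v₁ - R₂ v₂) ≤ b * (M * b + eR) :=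
    (le_abs_self ((v₁ - v₂) * (R v₁ - R₂ v₂))).trans
      ((abs_mul _ _).trans_le (mul_le_mul_of_nonneg_left hR (abs_nonneg _)))
  have hb : (v₁ - v₂) ^ 2 = b ^ 2 := (sq_abs _).symm
  have hκ : 0 ≤ K ^ 2 / lam := by positivity
  have hsplit : (M * b + eD) ^ 2 / 2 ≤ M ^ 2 * b ^ 2 + (eD + eR) ^ 2 := by
    nlinarith [sq_nonneg (M * b - eD)]
  rw [hb, show M ^ 2 * K ^ 2 / lam = K ^ 2 / lam * M ^ 2 by ring]
  nlinarith [mul_le_mul_of_nonneg_left hsplit hκ, sq_nonneg (b - eR)]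

end ClosureAdmissible

namespace IsClassicalSolution

variable {L T K lam M : ℝ} {D R D₁ D₂ R₁ R₂ : ℝ → ℝ}
  {u ut ux uxx u₁ ut₁ ux₁ uxx₁ u₂ ut₂ ux₂ uxx₂ : ℝ → ℝ → ℝ}

theorem periodic_u (hS : IsClassicalSolution L T K D R u ut ux uxx) (t : ℝ) : Periodic (u t) L :=
  hS.periodic t

theorem periodic_flux (hS : IsClassicalSolution L T K D R u ut ux uxx) (t : ℝ) :
    Periodic (fun x => D (u t x) * ux t x) L :=
  ((hS.periodic_u t).comp D).mul ((hS.periodic_u t).periodic_of_hasDerivAt (hS.deriv_x t))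

theorem mem_Icc (hS : IsClassicalSolution L T K D R u ut ux uxx) {t : ℝ} (ht : t ∈ Icc 0 T)
    (x : ℝ) : u t x ∈ Icc (-K) K :=
  abs_le.mp (hS.bound_u t ht x)

theorem integral_two_mul_sub_mul_sub_eq
    (hS₁ : IsClassicalSolution L T K D₁ R₁ u₁ ut₁ ux₁ uxx₁)
    (hS₂ : IsClassicalSolution L T K D₂ R₂ u₂ ut₂ ux₂ uxx₂)
    (hD₁ : Continuous D₁) (hD₂ : Continuous D₂) (hR₁ : Continuous R₁) (hR₂ : Continuous R₂)
    {τ : ℝ} (hτ : τ ∈ Icc 0 T) :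
    ∫ x in 0..L, 2 * (u₁ τ x - u₂ τ x) * (ut₁ τ x - ut₂ τ x)
      = ∫ x in 0..L, (-2 * (ux₁ τ x - ux₂ τ x) * (D₁ (u₁ τ x) * ux₁ τ x - D₂ (u₂ τ x) * ux₂ τ x)
          + 2 * (u₁ τ x - u₂ τ x) * (R₁ (u₁ τ x) - R₂ (u₂ τ x))) := by
  have cu₁ := hS₁.cont.uncurry_left τ
  have cu₂ := hS₂.cont.uncurry_left τ
  have cut₁ := hS₁.cont_t.uncurry_left τ
  have cut₂ := hS₂.cont_t.uncurry_left τ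
  have cux₁ := hS₁.cont_x.uncurry_left τ
  have cux₂ := hS₂.cont_x.uncurry_left τ
  have hibp : ∫ x in 0..L, (u₁ τ x - u₂ τ x) * (ut₁ τ x - R₁ (u₁ τ x) - (ut₂ τ x - R₂ (u₂ τ x)))
      = -∫ x in 0..L, (ux₁ τ x - ux₂ τ x) * (D₁ (u₁ τ x) * ux₁ τ x - D₂ (u₂ τ x) * ux₂ τ x) :=
    intervalIntegral.integral_mul_deriv_eq_neg_deriv_mul_of_periodic
      ((hS₁.periodic_u τ).sub (hS₂.periodic_u τ)) ((hS₁.periodic_flux τ).sub (hS₂.periodic_flux τ))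
      (fun x => (hS₁.deriv_x τ x).sub (hS₂.deriv_x τ x))
      (fun x => (hS₁.pde τ hτ x).sub (hS₂.pde τ hτ x))
      ((by fun_prop : Continuous fun x => ux₁ τ x - ux₂ τ x).intervalIntegrable _ _)
      ((by fun_prop : Continuous fun x =>
        ut₁ τ x - R₁ (u₁ τ x) - (ut₂ τ x - R₂ (u₂ τ x))).intervalIntegrable _ _)
  calc ∫ x in 0..L, 2 * (u₁ τ x - u₂ τ x) * (ut₁ τ x - ut₂ τ x)
      = ∫ x in 0..L, (2 * ((u₁ τ x - u₂ τ x) * (ut₁ τ x - R₁ (u₁ τ x) - (ut₂ τ x - R₂ (u₂ τ x))))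
          + 2 * (u₁ τ x - u₂ τ x) * (R₁ (u₁ τ x) - R₂ (u₂ τ x))) :=
        intervalIntegral.integral_congr fun x _ => by ring
    _ = _ := by
      rw [intervalIntegral.integral_add ((by fun_prop : Continuous _).intervalIntegrable _ _)
          ((by fun_prop : Continuous _).intervalIntegrable _ _),
        intervalIntegral.integral_add ((by fun_prop : Continuous _).intervalIntegrable _ _)
          ((by fun_prop : Continuous _).intervalIntegrable _ _)]
      simp only [mul_assoc, intervalIntegral.integral_const_mul, hibp]
      ring

theorem integral_two_mul_sub_mul_sub_le (hA₁ : ClosureAdmissible lam M K D₁ R₁)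
    (hA₂ : ClosureAdmissible lam M K D₂ R₂)
    (hS₁ : IsClassicalSolution L T K D₁ R₁ u₁ ut₁ ux₁ uxx₁)
    (hS₂ : IsClassicalSolution L T K D₂ R₂ u₂ ut₂ ux₂ uxx₂) (hlam : 0 < lam) (hL : 0 ≤ L)
    {eD eR : ℝ} (heD : ∀ s ∈ Icc (-K) K, |D₁ s - D₂ s| ≤ eD)
    (heR : ∀ s ∈ Icc (-K) K, |R₁ s - R₂ s| ≤ eR) {τ : ℝ} (hτ : τ ∈ Icc 0 T) :
    ∫ x in 0..L, 2 * (u₁ τ x - u₂ τ x) * (ut₁ τ x - ut₂ τ x)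
      ≤ (M ^ 2 * K ^ 2 / lam + 2 * M + 1) * (∫ x in 0..L, (u₁ τ x - u₂ τ x) ^ 2)
        + (K ^ 2 / lam + 1) * (eD + eR) ^ 2 * L := by
  have hD₁ := hA₁.continuous_D
  have hD₂ := hA₂.continuous_D
  have hR₁ := hA₁.continuous_R
  have hR₂ := hA₂.continuous_R
  have cu₁ := hS₁.cont.uncurry_left τ
  have cu₂ := hS₂.cont.uncurry_left τ
  have cux₁ := hS₁.cont_x.uncurry_left τ
  have cux₂ := hS₂.cont_x.uncurry_left τ
  rw [hS₁.integral_two_mul_sub_mul_sub_eq hS₂ hD₁ hD₂ hR₁ hR₂ hτ]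
  calc _ ≤ ∫ x in 0..L, ((M ^ 2 * K ^ 2 / lam + 2 * M + 1) * (u₁ τ x - u₂ τ x) ^ 2
          + (K ^ 2 / lam + 1) * (eD + eR) ^ 2) :=
        intervalIntegral.integral_mono_on hL ((by fun_prop : Continuous _).intervalIntegrable _ _)
          ((by fun_prop : Continuous _).intervalIntegrable _ _) fun x _ =>
          hA₁.flux_reaction_gap_le hlam (hS₁.mem_Icc hτ x) (hS₂.bound_ux τ hτ x)
            (heD _ (hS₂.mem_Icc hτ x)) (heR _ (hS₂.mem_Icc hτ x))
    _ = _ := by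
      rw [intervalIntegral.integral_add ((by fun_prop : Continuous _).intervalIntegrable _ _)
          intervalIntegrable_const, intervalIntegral.integral_const_mul,
        intervalIntegral.integral_const]
      simp only [sub_zero, smul_eq_mul]
      ring

theorem hasDerivAt_integral_sq_sub (hS₁ : IsClassicalSolution L T K D₁ R₁ u₁ ut₁ ux₁ uxx₁)
    (hS₂ : IsClassicalSolution L T K D₂ R₂ u₂ ut₂ ux₂ uxx₂) (τ : ℝ) :
    HasDerivAt (fun t => ∫ x in 0..L, (u₁ t x - u₂ t x) ^ 2)
      (∫ x in 0..L, 2 * (u₁ τ x - u₂ τ x) * (ut₁ τ x - ut₂ τ x)) τ :=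
  intervalIntegral.hasDerivAt_integral_of_continuous
    (F := fun t x => (u₁ t x - u₂ t x) ^ 2)
    (F' := fun t x => 2 * (u₁ t x - u₂ t x) * (ut₁ t x - ut₂ t x))
    (by have := hS₁.cont; have := hS₂.cont; fun_prop)
    (by have := hS₁.cont; have := hS₂.cont; have := hS₁.cont_t; have := hS₂.cont_t; fun_prop)
    (fun t x => (((hS₁.deriv_t t x).fun_sub (hS₂.deriv_t t x)).fun_pow 2).congr_deriv
      (by norm_num)) τ

theorem integral_sq_sub_le_gronwallBound (hA₁ : ClosureAdmissible lam M K D₁ R₁)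
    (hA₂ : ClosureAdmissible lam M K D₂ R₂)
    (hS₁ : IsClassicalSolution L T K D₁ R₁ u₁ ut₁ ux₁ uxx₁)
    (hS₂ : IsClassicalSolution L T K D₂ R₂ u₂ ut₂ ux₂ uxx₂) (hlam : 0 < lam) (hL : 0 ≤ L)
    {eD eR : ℝ} (heD : ∀ s ∈ Icc (-K) K, |D₁ s - D₂ s| ≤ eD)
    (heR : ∀ s ∈ Icc (-K) K, |R₁ s - R₂ s| ≤ eR) (h0 : ∀ x, u₁ 0 x = u₂ 0 x) {t : ℝ}
    (ht : t ∈ Icc 0 T) :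
    ∫ x in 0..L, (u₁ t x - u₂ t x) ^ 2
      ≤ gronwallBound 0 (M ^ 2 * K ^ 2 / lam + 2 * M + 1)
          ((K ^ 2 / lam + 1) * (eD + eR) ^ 2 * L) t := by
  simpa using le_gronwallBound_of_hasDerivAt (fun τ _ => hasDerivAt_integral_sq_sub hS₁ hS₂ τ)
    (by simp [h0]) (fun τ hτ => integral_two_mul_sub_mul_sub_le hA₁ hA₂ hS₁ hS₂ hlam hL heD heR
      (Ico_subset_Icc_self hτ)) t ht

end IsClassicalSolution

theorem finite_time_rollout_stability_general
    (L T lam M K : ℝ) (hL : 0 < L) (hlam : 0 < lam) :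
    ∃ C : ℝ, 0 ≤ C ∧
      ∀ (D₁ D₂ R₁ R₂ : ℝ → ℝ)
        (u₁ ut₁ ux₁ uxx₁ u₂ ut₂ ux₂ uxx₂ : ℝ → ℝ → ℝ),
        ClosureAdmissible lam M K D₁ R₁ →
        ClosureAdmissible lam M K D₂ R₂ →
        IsClassicalSolution L T K D₁ R₁ u₁ ut₁ ux₁ uxx₁ →
        IsClassicalSolution L T K D₂ R₂ u₂ ut₂ ux₂ uxx₂ →
        (∀ x : ℝ, u₁ 0 x = u₂ 0 x) →
        ∀ t ∈ Set.Icc (0:ℝ) T,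
          Real.sqrt (∫ x in (0:ℝ)..L, (u₁ t x - u₂ t x) ^ 2)
            ≤ C * ((⨆ s : Set.Icc (-K) K, |D₁ s - D₂ s|)
                    + (⨆ s : Set.Icc (-K) K, |R₁ s - R₂ s|)) := by
  set A := M ^ 2 * K ^ 2 / lam + 2 * M + 1
  set B := K ^ 2 / lam + 1
  refine ⟨√(B * L * (exp (A * T) - 1) / A), sqrt_nonneg _, ?_⟩
  intro D₁ D₂ R₁ R₂ u₁ ut₁ ux₁ uxx₁ u₂ ut₂ ux₂ uxx₂ hA₁ hA₂ hS₁ hS₂ h0 t ht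
  have hApos : 0 < A := by have := hA₁.const_nonneg; positivity
  set ε := (⨆ s : Icc (-K) K, |D₁ s - D₂ s|) + ⨆ s : Icc (-K) K, |R₁ s - R₂ s|
  have hε : 0 ≤ ε :=
    add_nonneg (iSup_nonneg fun _ => abs_nonneg _) (iSup_nonneg fun _ => abs_nonneg _)
  have hE := hS₁.integral_sq_sub_le_gronwallBound hA₁ hA₂ hS₂ hlam hL.le
    (fun _ hs => abs_sub_le_iSup_of_abs_le hA₁.2.2.1 hA₂.2.2.1 hs)
    (fun _ hs => abs_sub_le_iSup_of_abs_le hA₁.2.2.2.1 hA₂.2.2.2.1 hs) h0 ht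
  have hET : gronwallBound 0 A (B * ε ^ 2 * L) t ≤ B * L * (exp (A * T) - 1) / A * ε ^ 2 := by
    refine (gronwallBound_mono le_rfl (by positivity) hApos.le ht.2).trans_eq ?_
    rw [gronwallBound_of_K_ne_0 hApos.ne']
    ring
  calc √(∫ x in 0..L, (u₁ t x - u₂ t x) ^ 2) ≤ √(B * L * (exp (A * T) - 1) / A * ε ^ 2) :=
        sqrt_le_sqrt (hE.trans hET)
    _ = √(B * L * (exp (A * T) - 1) / A) * ε := by rw [sqrt_mul' _ (sq_nonneg ε), sqrt_sq hε]

/-- **Finite-time rollout stability under closure perturbation.**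
For `L, T, λ > 0` and `M, K ≥ 0` there is a constant `C_T ≥ 0`, depending only
on `L, T, λ, M, K`, such that any two classical `L`-periodic solutions on
`[0, T]` with admissible closure pairs (uniform parabolicity `λ`, Lipschitz and
bound constant `M`, state/gradient bounds `K`) and the same initial data
satisfy, for all `t ∈ [0, T]`,
`‖u₁(t) − u₂(t)‖_{L²(0,L)} ≤ C_T (‖D₁ − D₂‖_{L^∞[−K,K]} + ‖R₁ − R₂‖_{L^∞[−K,K]})`. -/
theorem finite_time_rollout_stability
    (L T lam M K : ℝ) (hL : 0 < L) (hT : 0 < T) (hlam : 0 < lam)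
    (hM : 0 ≤ M) (hK : 0 ≤ K) :
    ∃ C : ℝ, 0 ≤ C ∧
      ∀ (D₁ D₂ R₁ R₂ : ℝ → ℝ)
        (u₁ ut₁ ux₁ uxx₁ u₂ ut₂ ux₂ uxx₂ : ℝ → ℝ → ℝ),
        ClosureAdmissible lam M K D₁ R₁ →
        ClosureAdmissible lam M K D₂ R₂ →
        IsClassicalSolution L T K D₁ R₁ u₁ ut₁ ux₁ uxx₁ →
        IsClassicalSolution L T K D₂ R₂ u₂ ut₂ ux₂ uxx₂ →
        (∀ x : ℝ, u₁ 0 x = u₂ 0 x) →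
        ∀ t ∈ Set.Icc (0:ℝ) T,
          Real.sqrt (∫ x in (0:ℝ)..L, (u₁ t x - u₂ t x) ^ 2)
            ≤ C * ((⨆ s : Set.Icc (-K) K, |D₁ s - D₂ s|)
                    + (⨆ s : Set.Icc (-K) K, |R₁ s - R₂ s|)) :=
  finite_time_rollout_stability_general L T lam M K hL hlam
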